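/- Let (A, V, ψ, σ) be a quadruple where ψ : V ⊗ A → A ⊗ V satisfies the multiplicativity condition, and suppose the twisted condition (μ_A ⊗ V) ∘ (A ⊗ ψ) ∘ (σ ⊗ A) = (μ_A ⊗ V) ∘ (A ⊗ σ) ∘ (ψ ⊗ V) ∘ (V ⊗ ψ) and the cocycle condition (μ_A ⊗ V) ∘ (A ⊗ σ) ∘ (σ ⊗ V) = (μ_A ⊗ V) ∘ (A ⊗ σ) ∘ (ψ ⊗ V) ∘ (V ⊗ σ) hold, and that ∇ ∘ σ = σ for the associated idempotent ∇. Then the product μ_{A⊗V} = (μ_A ⊗ V) ∘ (μ_A ⊗ σ) ∘ (A ⊗ ψ ⊗ V) on A ⊗ V is associative. -/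

import Mathlib

/-!
For `g : M ⊗ N → A ⊗ W` and `n : N`, `liftRight g n` is the left `A`-linear map
`a ⊗ m ↦ a • g (m ⊗ n)`. Right multiplication by `x` in `A ⊗ V` is `liftRight (wcpAux ψ σ) x`,
and for `x = c ⊗ u` it factors as `liftRight σ u ∘ liftRight ψ c`. Multiplicativity of `ψ`
turns `wcpAux` applied to `v ⊗ b • x` into right multiplication by `x` after `ψ (v ⊗ b)`; the
cocycle condition composes two `σ`-steps into right multiplication by a value of `σ`, so that
`σ`-steps commute with `wcpAux`; the twisted condition then moves right multiplication by
`c ⊗ u` past a `σ`-step. Both bracketings of `(a ⊗ v)(b ⊗ w)(c ⊗ u)` thereby become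
`a • liftRight (wcpAux ψ σ) (liftRight σ u (ψ (w ⊗ c))) (ψ (v ⊗ b))`.
-/

open TensorProduct

variable {R A V : Type*} [CommRing R] [Ring A] [Algebra R A]
  [AddCommGroup V] [Module R V]

/-- (μ_A ⊗ V) ∘ (A ⊗ ψ) ∘ (ψ ⊗ A) : (V ⊗ A) ⊗ A → A ⊗ V -/
noncomputable def psiMulLHS (ψ : V ⊗[R] A →ₗ[R] A ⊗[R] V) :
    (V ⊗[R] A) ⊗[R] A →ₗ[R] A ⊗[R] V :=
  TensorProduct.map (LinearMap.mul' R A) LinearMap.id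
    ∘ₗ (TensorProduct.assoc R A A V).symm.toLinearMap
    ∘ₗ LinearMap.lTensor A ψ
    ∘ₗ (TensorProduct.assoc R A V A).toLinearMap
    ∘ₗ LinearMap.rTensor A ψ

/-- ψ ∘ (V ⊗ μ_A) : (V ⊗ A) ⊗ A → A ⊗ V -/
noncomputable def psiMulRHS (ψ : V ⊗[R] A →ₗ[R] A ⊗[R] V) :
    (V ⊗[R] A) ⊗[R] A →ₗ[R] A ⊗[R] V :=
  ψ ∘ₗ LinearMap.lTensor V (LinearMap.mul' R A)
    ∘ₗ (TensorProduct.assoc R V A A).toLinearMap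

/-- ∇ = (μ_A ⊗ V) ∘ (A ⊗ ψ) ∘ (A ⊗ V ⊗ η_A) : A ⊗ V → A ⊗ V -/
noncomputable def nabla (ψ : V ⊗[R] A →ₗ[R] A ⊗[R] V) :
    A ⊗[R] V →ₗ[R] A ⊗[R] V :=
  TensorProduct.map (LinearMap.mul' R A) LinearMap.id
    ∘ₗ (TensorProduct.assoc R A A V).symm.toLinearMap
    ∘ₗ LinearMap.lTensor A ψ
    ∘ₗ LinearMap.lTensor A ((TensorProduct.mk R V A).flip 1)


/-- Twisted condition LHS: (μ_A ⊗ V) ∘ (A ⊗ ψ) ∘ (σ ⊗ A) : (V ⊗ V) ⊗ A → A ⊗ V. -/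
noncomputable def twistedLHS (ψ : V ⊗[R] A →ₗ[R] A ⊗[R] V)
    (σ : V ⊗[R] V →ₗ[R] A ⊗[R] V) : (V ⊗[R] V) ⊗[R] A →ₗ[R] A ⊗[R] V :=
  TensorProduct.map (LinearMap.mul' R A) LinearMap.id
    ∘ₗ (TensorProduct.assoc R A A V).symm.toLinearMap
    ∘ₗ LinearMap.lTensor A ψ
    ∘ₗ (TensorProduct.assoc R A V A).toLinearMap
    ∘ₗ LinearMap.rTensor A σ

/-- Twisted condition RHS: (μ_A ⊗ V) ∘ (A ⊗ σ) ∘ (ψ ⊗ V) ∘ (V ⊗ ψ) : V ⊗ (V ⊗ A) → A ⊗ V. -/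
noncomputable def twistedRHS (ψ : V ⊗[R] A →ₗ[R] A ⊗[R] V)
    (σ : V ⊗[R] V →ₗ[R] A ⊗[R] V) : V ⊗[R] (V ⊗[R] A) →ₗ[R] A ⊗[R] V :=
  TensorProduct.map (LinearMap.mul' R A) LinearMap.id
    ∘ₗ (TensorProduct.assoc R A A V).symm.toLinearMap
    ∘ₗ LinearMap.lTensor A σ
    ∘ₗ (TensorProduct.assoc R A V V).toLinearMap
    ∘ₗ LinearMap.rTensor V ψ
    ∘ₗ (TensorProduct.assoc R V A V).symm.toLinearMap
    ∘ₗ LinearMap.lTensor V ψ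

/-- Cocycle condition LHS: (μ_A ⊗ V) ∘ (A ⊗ σ) ∘ (σ ⊗ V) : (V ⊗ V) ⊗ V → A ⊗ V. -/
noncomputable def cocycleLHS (σ : V ⊗[R] V →ₗ[R] A ⊗[R] V) :
    (V ⊗[R] V) ⊗[R] V →ₗ[R] A ⊗[R] V :=
  TensorProduct.map (LinearMap.mul' R A) LinearMap.id
    ∘ₗ (TensorProduct.assoc R A A V).symm.toLinearMap
    ∘ₗ LinearMap.lTensor A σ
    ∘ₗ (TensorProduct.assoc R A V V).toLinearMap
    ∘ₗ LinearMap.rTensor V σ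

/-- Cocycle condition RHS: (μ_A ⊗ V) ∘ (A ⊗ σ) ∘ (ψ ⊗ V) ∘ (V ⊗ σ) : V ⊗ (V ⊗ V) → A ⊗ V. -/
noncomputable def cocycleRHS (ψ : V ⊗[R] A →ₗ[R] A ⊗[R] V)
    (σ : V ⊗[R] V →ₗ[R] A ⊗[R] V) : V ⊗[R] (V ⊗[R] V) →ₗ[R] A ⊗[R] V :=
  TensorProduct.map (LinearMap.mul' R A) LinearMap.id
    ∘ₗ (TensorProduct.assoc R A A V).symm.toLinearMap
    ∘ₗ LinearMap.lTensor A σ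
    ∘ₗ (TensorProduct.assoc R A V V).toLinearMap
    ∘ₗ LinearMap.rTensor V ψ
    ∘ₗ (TensorProduct.assoc R V A V).symm.toLinearMap
    ∘ₗ LinearMap.lTensor V σ

/-- Auxiliary map V ⊗ (A ⊗ V) → A ⊗ V used in the weak crossed product. -/
noncomputable def wcpAux (ψ : V ⊗[R] A →ₗ[R] A ⊗[R] V)
    (σ : V ⊗[R] V →ₗ[R] A ⊗[R] V) : V ⊗[R] (A ⊗[R] V) →ₗ[R] A ⊗[R] V :=
  TensorProduct.map (LinearMap.mul' R A) LinearMap.id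
    ∘ₗ (TensorProduct.assoc R A A V).symm.toLinearMap
    ∘ₗ LinearMap.lTensor A σ
    ∘ₗ (TensorProduct.assoc R A V V).toLinearMap
    ∘ₗ LinearMap.rTensor V ψ
    ∘ₗ (TensorProduct.assoc R V A V).symm.toLinearMap

/-- The weak crossed product multiplication
μ_{A⊗V} = (μ_A ⊗ V) ∘ (μ_A ⊗ σ) ∘ (A ⊗ ψ ⊗ V) on A ⊗ V. -/
noncomputable def wcpMul (ψ : V ⊗[R] A →ₗ[R] A ⊗[R] V)
    (σ : V ⊗[R] V →ₗ[R] A ⊗[R] V) :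
    (A ⊗[R] V) ⊗[R] (A ⊗[R] V) →ₗ[R] A ⊗[R] V :=
  TensorProduct.map (LinearMap.mul' R A) LinearMap.id
    ∘ₗ (TensorProduct.assoc R A A V).symm.toLinearMap
    ∘ₗ LinearMap.lTensor A (wcpAux ψ σ)
    ∘ₗ (TensorProduct.assoc R A V (A ⊗[R] V)).toLinearMap

open LinearMap

section LiftRight

variable {M N W : Type*} [AddCommMonoid M] [Module R M] [AddCommMonoid N] [Module R N]
  [AddCommMonoid W] [Module R W]

noncomputable def liftRight (g : M ⊗[R] N →ₗ[R] A ⊗[R] W) (n : N) : A ⊗[R] M →ₗ[A] A ⊗[R] W :=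
  AlgebraTensorModule.lift (toSpanSingleton A _ (g ∘ₗ (mk R M N).flip n))

@[simp]
theorem liftRight_tmul (g : M ⊗[R] N →ₗ[R] A ⊗[R] W) (n : N) (a : A) (m : M) :
    liftRight g n (a ⊗ₜ m) = a • g (m ⊗ₜ n) :=
  rfl

@[simp]
theorem liftRight_zero (g : M ⊗[R] N →ₗ[R] A ⊗[R] W) : liftRight g (0 : N) = 0 := by
  ext m
  simp

theorem liftRight_add (g : M ⊗[R] N →ₗ[R] A ⊗[R] W) (n n' : N) :
    liftRight g (n + n') = liftRight g n + liftRight g n' := by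
  ext m
  simp [tmul_add]

theorem map_mul'_assoc_symm_tmul (a : A) (z : A ⊗[R] W) :
    map (mul' R A) id ((TensorProduct.assoc R A A W).symm (a ⊗ₜ z)) = a • z := by
  induction z using TensorProduct.induction_on with
  | zero => simp
  | tmul b w => simp [smul_tmul']
  | add x y hx hy => simp only [tmul_add, map_add, hx, hy, smul_add]

theorem map_mul'_lTensor_assoc_tmul (g : M ⊗[R] N →ₗ[R] A ⊗[R] W) (p : A ⊗[R] M) (n : N) :
    map (mul' R A) id ((TensorProduct.assoc R A A W).symm
      (lTensor A g (TensorProduct.assoc R A M N (p ⊗ₜ n)))) = liftRight g n p := by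
  induction p using TensorProduct.induction_on with
  | zero => simp
  | tmul a m => simp [map_mul'_assoc_symm_tmul]
  | add x y hx hy => simp only [add_tmul, map_add, hx, hy]

end LiftRight

section WeakCrossedProduct

variable (ψ : V ⊗[R] A →ₗ[R] A ⊗[R] V) (σ : V ⊗[R] V →ₗ[R] A ⊗[R] V)

theorem wcpMul_tmul (z x : A ⊗[R] V) : wcpMul ψ σ (z ⊗ₜ x) = liftRight (wcpAux ψ σ) x z := by
  simp [wcpMul, map_mul'_lTensor_assoc_tmul]

theorem wcpAux_tmul_tmul (v : V) (b : A) (w : V) :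
    wcpAux ψ σ (v ⊗ₜ (b ⊗ₜ w)) = liftRight σ w (ψ (v ⊗ₜ b)) := by
  simp [wcpAux, map_mul'_lTensor_assoc_tmul]

theorem liftRight_wcpAux_tmul (c : A) (u : V) :
    liftRight (wcpAux ψ σ) (c ⊗ₜ u) = liftRight σ u ∘ₗ liftRight ψ c := by
  ext v
  simp [wcpAux_tmul_tmul]

variable {ψ σ}

theorem psi_tmul_mul (hψ : psiMulLHS ψ = psiMulRHS ψ) (v : V) (b c : A) :
    ψ (v ⊗ₜ (b * c)) = liftRight ψ c (ψ (v ⊗ₜ b)) := by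
  simpa [psiMulLHS, psiMulRHS, map_mul'_lTensor_assoc_tmul] using
    (LinearMap.congr_fun hψ ((v ⊗ₜ b) ⊗ₜ c)).symm

theorem liftRight_psi_sigma_tmul (htw : twistedLHS ψ σ =
      twistedRHS ψ σ ∘ₗ (TensorProduct.assoc R V V A).toLinearMap) (v w : V) (c : A) :
    liftRight ψ c (σ (v ⊗ₜ w)) = wcpAux ψ σ (v ⊗ₜ ψ (w ⊗ₜ c)) := by
  simpa [twistedLHS, twistedRHS, wcpAux, map_mul'_lTensor_assoc_tmul] using
    LinearMap.congr_fun htw ((v ⊗ₜ w) ⊗ₜ c)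

theorem liftRight_sigma_sigma_tmul (hco : cocycleLHS σ =
      cocycleRHS ψ σ ∘ₗ (TensorProduct.assoc R V V V).toLinearMap) (v w u : V) :
    liftRight σ u (σ (v ⊗ₜ w)) = wcpAux ψ σ (v ⊗ₜ σ (w ⊗ₜ u)) := by
  simpa [cocycleLHS, cocycleRHS, wcpAux, map_mul'_lTensor_assoc_tmul] using
    LinearMap.congr_fun hco ((v ⊗ₜ w) ⊗ₜ u)

theorem wcpAux_tmul_smul (hψ : psiMulLHS ψ = psiMulRHS ψ) (v : V) (b : A) (x : A ⊗[R] V) :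
    wcpAux ψ σ (v ⊗ₜ (b • x)) = liftRight (wcpAux ψ σ) x (ψ (v ⊗ₜ b)) := by
  induction x using TensorProduct.induction_on with
  | zero => simp
  | tmul c u =>
    rw [smul_tmul', smul_eq_mul, wcpAux_tmul_tmul, psi_tmul_mul hψ, liftRight_wcpAux_tmul,
      comp_apply]
  | add x y hx hy =>
    simp only [smul_add, tmul_add, map_add, hx, hy, liftRight_add, LinearMap.add_apply]

theorem liftRight_sigma_comp_liftRight_sigma (hco : cocycleLHS σ =
      cocycleRHS ψ σ ∘ₗ (TensorProduct.assoc R V V V).toLinearMap) (w u : V) :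
    liftRight σ u ∘ₗ liftRight σ w = liftRight (wcpAux ψ σ) (σ (w ⊗ₜ u)) := by
  ext v
  simp [liftRight_sigma_sigma_tmul hco]

theorem liftRight_sigma_wcpAux (hψ : psiMulLHS ψ = psiMulRHS ψ) (hco : cocycleLHS σ =
      cocycleRHS ψ σ ∘ₗ (TensorProduct.assoc R V V V).toLinearMap) (v u : V) (x : A ⊗[R] V) :
    liftRight σ u (wcpAux ψ σ (v ⊗ₜ x)) = wcpAux ψ σ (v ⊗ₜ liftRight σ u x) := by
  induction x using TensorProduct.induction_on with
  | zero => simp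
  | tmul b w =>
    rw [wcpAux_tmul_tmul, ← comp_apply (liftRight σ u), liftRight_sigma_comp_liftRight_sigma hco,
      liftRight_tmul, wcpAux_tmul_smul hψ]
  | add x y hx hy => simp only [tmul_add, map_add, hx, hy]

theorem liftRight_wcpAux_comp_liftRight_sigma (hψ : psiMulLHS ψ = psiMulRHS ψ)
    (htw : twistedLHS ψ σ = twistedRHS ψ σ ∘ₗ (TensorProduct.assoc R V V A).toLinearMap)
    (hco : cocycleLHS σ = cocycleRHS ψ σ ∘ₗ (TensorProduct.assoc R V V V).toLinearMap)
    (w : V) (c : A) (u : V) :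
    liftRight (wcpAux ψ σ) (c ⊗ₜ u) ∘ₗ liftRight σ w =
      liftRight (wcpAux ψ σ) (liftRight σ u (ψ (w ⊗ₜ c))) := by
  ext v
  simp [liftRight_wcpAux_tmul, liftRight_psi_sigma_tmul htw, liftRight_sigma_wcpAux hψ hco]

end WeakCrossedProduct

theorem wcpMul_assoc (ψ : V ⊗[R] A →ₗ[R] A ⊗[R] V)
    (σ : V ⊗[R] V →ₗ[R] A ⊗[R] V)
    (hψ : psiMulLHS ψ = psiMulRHS ψ)
    (htw : twistedLHS ψ σ =
      twistedRHS ψ σ ∘ₗ (TensorProduct.assoc R V V A).toLinearMap)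
    (hco : cocycleLHS σ =
      cocycleRHS ψ σ ∘ₗ (TensorProduct.assoc R V V V).toLinearMap) :
    wcpMul ψ σ ∘ₗ LinearMap.rTensor (A ⊗[R] V) (wcpMul ψ σ) =
      wcpMul ψ σ ∘ₗ LinearMap.lTensor (A ⊗[R] V) (wcpMul ψ σ)
        ∘ₗ (TensorProduct.assoc R (A ⊗[R] V) (A ⊗[R] V) (A ⊗[R] V)).toLinearMap := by
  ext a v b w c u
  simp only [AlgebraTensorModule.curry_apply, curry_apply, coe_restrictScalars, comp_apply,
    rTensor_tmul, lTensor_tmul, LinearEquiv.coe_coe, TensorProduct.assoc_tmul, wcpMul_tmul,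
    liftRight_tmul, wcpAux_tmul_tmul, map_smul, wcpAux_tmul_smul hψ]
  rw [← comp_apply (liftRight (wcpAux ψ σ) (c ⊗ₜ u)),
    liftRight_wcpAux_comp_liftRight_sigma hψ htw hco]
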